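/- Let e0, e1 be the standard basis of ℂ², let ψ⁻ = (1/√2)(e0⊗e1 − e1⊗e0) ∈ ℂ⁴ be the singlet vector, and for δ ∈ ℝ let ζ_δ = (1/√2)(y⊗y + e^{iδ} ȳ⊗ȳ) where y = (e0 + i·e1)/√2 and ȳ = (e0 − i·e1)/√2. Then the singlet projector |ψ⁻⟩⟨ψ⁻| does NOT belong to the convex hull (over ℝ) of the set { |ζ_δ⟩⟨ζ_δ| : δ ∈ ℝ }. -/

import Mathlib

open Matrix

noncomputable section

/-- The outer product `|u⟩⟨v|` of two vectors. -/
def outer {ι : Type*} (u v : ι → ℂ) : Matrix ι ι ℂ :=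
  Matrix.of fun i j => u i * star (v j)

/-- The tensor (Kronecker) product of two qubit vectors. -/
def tens (u v : Fin 2 → ℂ) : Fin 2 × Fin 2 → ℂ := fun p => u p.1 * v p.2

def e0 : Fin 2 → ℂ := ![1, 0]
def e1 : Fin 2 → ℂ := ![0, 1]

/-- `y = (e0 + i·e1)/√2`. -/
def yp : Fin 2 → ℂ := ((Real.sqrt 2 : ℂ))⁻¹ • (e0 + Complex.I • e1)
/-- `ȳ = (e0 − i·e1)/√2`. -/
def ym : Fin 2 → ℂ := ((Real.sqrt 2 : ℂ))⁻¹ • (e0 - Complex.I • e1)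

/-- The singlet vector `ψ⁻ = (1/√2)(e0⊗e1 − e1⊗e0)`. -/
def psiMinus : Fin 2 × Fin 2 → ℂ :=
  ((Real.sqrt 2 : ℂ))⁻¹ • (tens e0 e1 - tens e1 e0)

/-- `ζ_δ = (1/√2)(y⊗y + e^{iδ} ȳ⊗ȳ)`. -/
def zeta (δ : ℝ) : Fin 2 × Fin 2 → ℂ :=
  ((Real.sqrt 2 : ℂ))⁻¹ • (tens yp yp + Complex.exp ((δ : ℂ) * Complex.I) • tens ym ym)

/-- The separating functional: real part of the `((0,1),(1,0))` entry. -/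
def sep : Matrix (Fin 2 × Fin 2) (Fin 2 × Fin 2) ℂ →ₗ[ℝ] ℝ where
  toFun M := (M (0, 1) (1, 0)).re
  map_add' M N := by simp
  map_smul' c M := by simp

lemma sep_apply (M : Matrix (Fin 2 × Fin 2) (Fin 2 × Fin 2) ℂ) :
    sep M = (M (0, 1) (1, 0)).re := rfl

lemma zeta_symm (δ : ℝ) : zeta δ (0, 1) = zeta δ (1, 0) := by
  simp [zeta, tens, mul_comm]

lemma sep_zeta (δ : ℝ) : 0 ≤ sep (outer (zeta δ) (zeta δ)) := by
  have h : outer (zeta δ) (zeta δ) (0, 1) (1, 0)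
      = zeta δ (1, 0) * star (zeta δ (1, 0)) := by
    rw [outer, Matrix.of_apply, zeta_symm]
  simp only [sep_apply, h]
  rw [Complex.star_def, Complex.mul_conj]
  simp [Complex.normSq_nonneg]

theorem singlet_not_in_third_scenario_solution_set :
    outer psiMinus psiMinus ∉
      convexHull ℝ {M | ∃ δ : ℝ, M = outer (zeta δ) (zeta δ)} := by
  intro hmem
  have hsub : convexHull ℝ {M | ∃ δ : ℝ, M = outer (zeta δ) (zeta δ)}
      ⊆ {M | 0 ≤ sep M} := by
    apply convexHull_min
    · rintro M ⟨δ, rfl⟩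
      exact sep_zeta δ
    · exact convex_halfSpace_ge (LinearMap.isLinear sep) 0
  have h0 : 0 ≤ sep (outer psiMinus psiMinus) := hsub hmem
  have hval : sep (outer psiMinus psiMinus) = -(1/2) := by
    have h2 : (Real.sqrt 2 : ℂ) * (Real.sqrt 2 : ℂ) = 2 := by
      rw [← Complex.ofReal_mul, Real.mul_self_sqrt (by norm_num)]
      norm_num
    simp only [sep_apply, outer, psiMinus, tens, e0, e1,
      Matrix.of_apply, Pi.smul_apply, Pi.sub_apply, smul_eq_mul]
    field_simp
    simp [Complex.div_re, Complex.normSq_apply]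
    field_simp
    norm_num
  rw [hval] at h0
  norm_num at h0
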